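/- arXiv:2510.24423 — 4 statements merged into one kernel-verified Lean document; each statement's English description precedes it below -/
import Mathlib

section
/- Let (X,d) be a Lorentzian metric space with no chronological boundary, let C ⊆ X be a compact subset, and let K ⊆ X × X be a closed relation that is reflexive, transitive, and antisymmetric, with I ⊆ K ⊆ J. Then the set K(C) = K⁺(C) ∩ K⁻(C) is compact, where K⁺(C) = {y : ∃x ∈ C, (x,y) ∈ K} and K⁻(C) = {x : ∃y ∈ C, (x,y) ∈ K}. -/
open Filter Topology Set

variable {X : Type*}

/-- Axiom (ii) of a Lorentzian metric space, relative to a given topology `T`: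
`d` is continuous and, for all `x y` and `ε > 0`, the set
`I_ε ∩ (closure (I(x,y)) × closure (I(x,y)))` is compact. -/
def LMSAxiom2 (T : TopologicalSpace X) (d : X → X → ℝ) : Prop :=
  letI := T
  Continuous (fun p : X × X => d p.1 p.2) ∧
    ∀ x y : X, ∀ ε : ℝ, 0 < ε →
      IsCompact ({p : X × X | ε ≤ d p.1 p.2} ∩
        (closure {z : X | 0 < d x z ∧ 0 < d z y} ×ˢ closure {z : X | 0 < d x z ∧ 0 < d z y}))

/-- Lorentzian metric space (LMS): `d ≥ 0`, reverse triangle inequality,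
axiom (ii) for the topology `T`, and `d` distinguishes points. -/
def IsLMS (T : TopologicalSpace X) (d : X → X → ℝ) : Prop :=
  (∀ x y : X, 0 ≤ d x y) ∧
  (∀ x y z : X, 0 < d x y → 0 < d y z → d x y + d y z ≤ d x z) ∧
  LMSAxiom2 T d ∧
  (∀ x y : X, x ≠ y → ∃ z : X, d x z ≠ d y z ∨ d z x ≠ d z y)

/-- No chronological boundary: `I(X) = X`. -/
def NoBoundary (d : X → X → ℝ) : Prop :=
  ∀ x : X, (∃ p, 0 < d p x) ∧ (∃ q, 0 < d x q)

/-- Countably generated: some countable set `G` satisfies `I(G) = X`. -/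
def CountablyGenerated (d : X → X → ℝ) : Prop :=
  ∃ G : Set X, G.Countable ∧ ∀ x : X, (∃ p ∈ G, 0 < d p x) ∧ (∃ q ∈ G, 0 < d x q)

/-- The causal relation `J` defined from the Lorentzian distance. -/
def Jrel (d : X → X → ℝ) (x y : X) : Prop :=
  ∀ p : X, d p x ≤ d p y ∧ d y p ≤ d x p

/-- Strict causal relation: `x < y`. -/
def CausalLt (d : X → X → ℝ) (x y : X) : Prop :=
  Jrel d x y ∧ x ≠ y

/-- An isocausal curve with parameter domain `S`. -/
def IsIsocausalOn (T : TopologicalSpace X) (d : X → X → ℝ) (γ : ℝ → X) (S : Set ℝ) : Prop :=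
  letI := T
  ContinuousOn γ S ∧ ∀ s ∈ S, ∀ t ∈ S, s < t → CausalLt d (γ s) (γ t)

/-- A maximizing curve on the domain `S`. -/
def MaximizingOn (d : X → X → ℝ) (γ : ℝ → X) (S : Set ℝ) : Prop :=
  ∀ t ∈ S, ∀ t' ∈ S, ∀ t'' ∈ S, t < t' → t' < t'' →
    d (γ t) (γ t') + d (γ t') (γ t'') = d (γ t) (γ t'')

/-- A time function: continuous and strictly increasing on causal pairs. -/
def IsTimeFunction (T : TopologicalSpace X) (d : X → X → ℝ) (τ : X → ℝ) : Prop :=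
  letI := T
  Continuous τ ∧ ∀ x y : X, CausalLt d x y → τ x < τ y

theorem IsCompact.isClosed_setOf_exists_mem_rel {X Y : Type*} [TopologicalSpace X]
    [TopologicalSpace Y] {C : Set X} (hC : IsCompact C) {K : Set (X × Y)} (hK : IsClosed K) :
    IsClosed {y | ∃ x ∈ C, (x, y) ∈ K} := by
  have := isCompact_iff_compactSpace.mp hC
  convert isClosedMap_snd_of_compactSpace (X := C) _
    (hK.preimage (continuous_subtype_val.prodMap continuous_id)) using 1
  ext y
  simp

section LorentzianMetricSpace

variable [T : TopologicalSpace X] {d : X → X → ℝ}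

def chronoDiamond (d : X → X → ℝ) (p q : X) : Set X := {z | 0 < d p z ∧ 0 < d z q}

theorem isOpen_chronoDiamond (hd : Continuous fun r : X × X => d r.1 r.2) (p q : X) :
    IsOpen (chronoDiamond d p q) :=
  (isOpen_lt continuous_const (hd.comp (Continuous.prodMk_right p))).inter
    (isOpen_lt continuous_const (hd.comp (Continuous.prodMk_left q)))

/-- With `p₂ ≪ p₁ ≪ p`, every `z ∈ I(p, q)` is the second coordinate of the pair `(p₁, z)`,
which lies in the compact set `I_ε ∩ (closure I(p₂, q))²` of axiom (ii) for `ε = d p₁ p`. -/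
theorem exists_isCompact_superset_chronoDiamond (h : IsLMS T d) {p₂ p₁ p : X}
    (h₂₁ : 0 < d p₂ p₁) (h₁ : 0 < d p₁ p) (q : X) :
    ∃ S, IsCompact S ∧ chronoDiamond d p q ⊆ S := by
  obtain ⟨-, htri, ⟨-, hcompact⟩, -⟩ := h
  refine ⟨_, (hcompact p₂ q _ h₁).image continuous_snd, fun z ⟨hpz, hzq⟩ => ?_⟩
  have hp₁z := htri _ _ _ h₁ hpz
  have hp₂z := htri _ _ _ h₂₁ (by linarith)
  have hp₁q := htri p₁ z q (by linarith) hzq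
  have hε : d p₁ p ≤ d p₁ z := by linarith
  exact ⟨(p₁, z), ⟨hε, subset_closure ⟨h₂₁, by linarith⟩, subset_closure ⟨by linarith, hzq⟩⟩, rfl⟩

/-- Cover `C` by finitely many open diamonds `I(p c, q c) ∋ c`; a point causally between two
points of `C` lies in one of the diamonds `I(p i, q j)`. -/
theorem exists_isCompact_superset_causalHull (h : IsLMS T d) (hnb : NoBoundary d) {C : Set X}
    (hC : IsCompact C) :
    ∃ S, IsCompact S ∧ {z | ∃ x ∈ C, ∃ y ∈ C, Jrel d x z ∧ Jrel d z y} ⊆ S := by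
  choose p hp using fun x => (hnb x).1
  choose q hq using fun x => (hnb x).2
  obtain ⟨t, ht⟩ := hC.elim_finite_subcover (fun c => chronoDiamond d (p c) (q c))
    (fun c => isOpen_chronoDiamond h.2.2.1.1 _ _) fun c _ => mem_iUnion.2 ⟨c, hp c, hq c⟩
  choose S hS hsub using fun a b =>
    exists_isCompact_superset_chronoDiamond h (hp (p (p a))) (hp (p a)) (q b)
  refine ⟨⋃ i ∈ t, ⋃ j ∈ t, S i j,
    t.isCompact_biUnion fun i _ => t.isCompact_biUnion fun j _ => hS i j, ?_⟩
  rintro z ⟨x, hx, y, hy, hxz, hzy⟩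
  obtain ⟨i, hi, hpx, -⟩ := mem_iUnion₂.1 (ht hx)
  obtain ⟨j, hj, -, hyq⟩ := mem_iUnion₂.1 (ht hy)
  exact mem_biUnion hi <| mem_biUnion hj <|
    hsub i j ⟨hpx.trans_le (hxz _).1, hyq.trans_le (hzy _).2⟩

end LorentzianMetricSpace

theorem lms_emerald_compact_general
    (T : TopologicalSpace X) (d : X → X → ℝ)
    (h : IsLMS T d) (hnb : NoBoundary d)
    (C : Set X) (hC : letI := T; IsCompact C)
    (K : Set (X × X)) (hKclosed : letI := T; IsClosed K)
    (hKJ : ∀ x y : X, (x, y) ∈ K → Jrel d x y) :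
    letI := T
    IsCompact ({y : X | ∃ x ∈ C, (x, y) ∈ K} ∩ {x : X | ∃ y ∈ C, (x, y) ∈ K}) := by
  let _ := T
  obtain ⟨S, hS, hsub⟩ := exists_isCompact_superset_causalHull h hnb hC
  have hclosed :=
    (hC.isClosed_setOf_exists_mem_rel hKclosed).inter
      (hC.isClosed_setOf_exists_mem_rel (hKclosed.preimage continuous_swap))
  exact hS.of_isClosed_subset hclosed fun z ⟨⟨x, hx, hxz⟩, y, hy, hzy⟩ =>
    hsub ⟨x, hx, y, hy, hKJ _ _ hxz, hKJ _ _ hzy⟩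

/-- In a Lorentzian metric space without chronological boundary, for any
compact set `C` and any closed order `K` with `I ⊆ K ⊆ J`, the set
`K(C) = K⁺(C) ∩ K⁻(C)` is compact. -/
theorem lms_emerald_compact
    (T : TopologicalSpace X) (d : X → X → ℝ)
    (h : IsLMS T d) (hnb : NoBoundary d)
    (C : Set X) (hC : letI := T; IsCompact C)
    (K : Set (X × X)) (hKclosed : letI := T; IsClosed K)
    (hKrefl : ∀ x : X, (x, x) ∈ K)
    (hKtrans : ∀ x y z : X, (x, y) ∈ K → (y, z) ∈ K → (x, z) ∈ K)
    (hKantisymm : ∀ x y : X, (x, y) ∈ K → (y, x) ∈ K → x = y)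
    (hIK : ∀ x y : X, 0 < d x y → (x, y) ∈ K)
    (hKJ : ∀ x y : X, (x, y) ∈ K → Jrel d x y) :
    letI := T
    IsCompact ({y : X | ∃ x ∈ C, (x, y) ∈ K} ∩ {x : X | ∃ y ∈ C, (x, y) ∈ K}) :=
  lms_emerald_compact_general T d h hnb C hC K hKclosed hKJ
end

section
/- Let (X,d) be a Lorentzian metric space with no chronological boundary, with topology 𝒯, and assume that for every point p ∈ X one has p ∈ closure(I⁺(p)) and p ∈ closure(I⁻(p)). Then the closure of I in X × X equals the causal relation J, and the Alexandrov topology (the topology generated by the chronological diamonds I(p,q) = I⁺(p) ∩ I⁻(q), p, q ∈ X) coincides with 𝒯. -/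
open Filter Topology Set

variable {X : Type*}

/-!
`closure I ⊆ J` because `I ⊆ J` and `J` is closed by continuity of `d`; conversely, for `x ≤ y`
the pairs `(x', y')` with `x' ≪ x`, `y ≪ y'` lie in `I` and approach `(x, y)` by the hypothesis
on the closures of `I^±(p)`.

Diamonds are open, so the Alexandrov topology is coarser than `𝒯`. For the converse, suppose no
diamond around `x` fits into an open `U ∋ x`. Then points of `Uᶜ` lying in diamonds with vertices
arbitrarily close to `x` exist and, by the compactness axiom, accumulate at some `z ∉ U`. Both
`(x, z)` and `(z, x)` then lie in `closure I = J`, and `J` is antisymmetric because `d`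
distinguishes points, so `z = x ∈ U`.
-/

lemma mem_closure_prod_iff {Y : Type*} [TopologicalSpace X] [TopologicalSpace Y]
    {s : Set (X × Y)} {x : X} {y : Y} :
    (x, y) ∈ closure s ↔ ∀ A ∈ 𝓝 x, ∀ B ∈ 𝓝 y, ∃ p ∈ s, p ∈ A ×ˢ B := by
  simp only [mem_closure_iff_nhds_basis ((𝓝 x).basis_sets.prod_nhds (𝓝 y).basis_sets),
    Prod.forall, id, and_imp]
  exact ⟨fun h A hA B hB => h A B hA hB, fun h A B hA hB => h A hA B hB⟩

namespace LorentzianMetricSpace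

variable {d : X → X → ℝ}

def chronoDiamond (d : X → X → ℝ) (p q : X) : Set X :=
  {z : X | 0 < d p z ∧ 0 < d z q}

lemma pos_trans (htri : ∀ x y z : X, 0 < d x y → 0 < d y z → d x y + d y z ≤ d x z)
    {a b c : X} (hab : 0 < d a b) (hbc : 0 < d b c) : 0 < d a c :=
  (add_pos hab hbc).trans_le (htri a b c hab hbc)

lemma jrel_of_pos (hd0 : ∀ x y : X, 0 ≤ d x y)
    (htri : ∀ x y z : X, 0 < d x y → 0 < d y z → d x y + d y z ≤ d x z)
    {a b : X} (hab : 0 < d a b) : Jrel d a b := by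
  intro p
  constructor
  · by_cases hpa : 0 < d p a
    · linarith [htri p a b hpa hab]
    · linarith [hd0 p b]
  · by_cases hbp : 0 < d b p
    · linarith [htri a b p hab hbp]
    · linarith [hd0 a p]

lemma eq_of_jrel_of_jrel (hsep : ∀ x y : X, x ≠ y → ∃ z : X, d x z ≠ d y z ∨ d z x ≠ d z y)
    {x y : X} (hxy : Jrel d x y) (hyx : Jrel d y x) : x = y := by
  by_contra hne
  obtain ⟨w, hw | hw⟩ := hsep x y hne
  · exact hw (le_antisymm (hyx w).2 (hxy w).2)
  · exact hw (le_antisymm (hxy w).1 (hyx w).1)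

variable [TopologicalSpace X]

lemma isOpen_chronoDiamond (hcont : Continuous fun p : X × X => d p.1 p.2) (p q : X) :
    IsOpen (chronoDiamond d p q) :=
  (isOpen_lt continuous_const (hcont.uncurry_left p)).inter
    (isOpen_lt continuous_const (hcont.uncurry_right q))

lemma isClosed_setOf_jrel (hcont : Continuous fun p : X × X => d p.1 p.2) :
    IsClosed {p : X × X | Jrel d p.1 p.2} := by
  simp only [Jrel, ofPred_forall, ofPred_and]
  exact isClosed_iInter fun w =>
    (isClosed_le ((hcont.uncurry_left w).comp continuous_fst)
        ((hcont.uncurry_left w).comp continuous_snd)).inter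
      (isClosed_le ((hcont.uncurry_right w).comp continuous_snd)
        ((hcont.uncurry_right w).comp continuous_fst))

lemma closure_setOf_pos_eq_setOf_jrel (hd0 : ∀ x y : X, 0 ≤ d x y)
    (htri : ∀ x y z : X, 0 < d x y → 0 < d y z → d x y + d y z ≤ d x z)
    (hcont : Continuous fun p : X × X => d p.1 p.2)
    (hlocal : ∀ p : X, p ∈ closure {q : X | 0 < d p q} ∧ p ∈ closure {q : X | 0 < d q p}) :
    closure {p : X × X | 0 < d p.1 p.2} = {p : X × X | Jrel d p.1 p.2} := by
  refine subset_antisymm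
    (closure_minimal (fun p hp => jrel_of_pos hd0 htri hp) (isClosed_setOf_jrel hcont)) ?_
  rintro ⟨a, b⟩ hab
  refine mem_closure_prod_iff.2 fun A hA B hB => ?_
  obtain ⟨a', ha'A, ha'a⟩ := mem_closure_iff_nhds.1 (hlocal a).2 A hA
  obtain ⟨b', hb'B, hbb'⟩ := mem_closure_iff_nhds.1 (hlocal b).1 B hB
  have ha'b : 0 < d a' b := ha'a.trans_le (hab a').1
  exact ⟨(a', b'), pos_trans htri ha'b hbb', ha'A, hb'B⟩

/-- With `p₁ ≪ p₀ ≪ x ≪ q₀ ≪ q₁`, the diamonds with vertices near `x` lie in `I(p₁, q₁)` at time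
separation at least `ε` from `p₀`, which is where axiom (ii) gives compactness. -/
lemma exists_nhds_isCompact_chronoDiamond_subset (h : IsLMS ‹_› d) (hnb : NoBoundary d) (x : X) :
    ∃ W ∈ 𝓝 x, ∃ C : Set X, IsCompact C ∧ ∀ p ∈ W, ∀ q ∈ W, chronoDiamond d p q ⊆ C := by
  obtain ⟨-, htri, ⟨hcont, hcomp⟩, -⟩ := h
  obtain ⟨⟨p₀, hp₀x⟩, ⟨q₀, hxq₀⟩⟩ := hnb x
  obtain ⟨⟨p₁, hp₁p₀⟩, -⟩ := hnb p₀
  obtain ⟨-, ⟨q₁, hq₀q₁⟩⟩ := hnb q₀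
  set ε := d p₀ x / 2
  have hεpos : 0 < ε := half_pos hp₀x
  have hD : ∀ z, 0 < d p₀ z → 0 < d z q₀ → z ∈ chronoDiamond d p₁ q₁ := fun z hp₀z hzq₀ =>
    ⟨pos_trans htri hp₁p₀ hp₀z, pos_trans htri hzq₀ hq₀q₁⟩
  have hp₀D : p₀ ∈ chronoDiamond d p₁ q₁ :=
    ⟨hp₁p₀, pos_trans htri (pos_trans htri hp₀x hxq₀) hq₀q₁⟩
  refine ⟨{p | ε < d p₀ p} ∩ {q | 0 < d q q₀}, ?_, _,
    (hcomp p₁ q₁ ε hεpos).image continuous_snd, ?_⟩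
  · exact inter_mem
      ((isOpen_lt continuous_const (hcont.uncurry_left p₀)).mem_nhds (half_lt_self hp₀x))
      ((isOpen_lt continuous_const (hcont.uncurry_right q₀)).mem_nhds hxq₀)
  · rintro p ⟨hp : ε < d p₀ p, -⟩ q ⟨-, hq : 0 < d q q₀⟩ z ⟨hpz, hzq⟩
    have hp₀p : 0 < d p₀ p := hεpos.trans hp
    have hp₀z : ε ≤ d p₀ z := by linarith [htri p₀ p z hp₀p hpz]
    exact ⟨(p₀, z), ⟨hp₀z, subset_closure hp₀D,
      subset_closure (hD z (pos_trans htri hp₀p hpz) (pos_trans htri hzq hq))⟩, rfl⟩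

lemma exists_chronoDiamond_subset (h : IsLMS ‹_› d) (hnb : NoBoundary d)
    (hlocal : ∀ p : X, p ∈ closure {q : X | 0 < d p q} ∧ p ∈ closure {q : X | 0 < d q p})
    {U : Set X} (hU : IsOpen U) {x : X} (hx : x ∈ U) :
    ∃ p q, x ∈ chronoDiamond d p q ∧ chronoDiamond d p q ⊆ U := by
  by_contra! hbad
  obtain ⟨W, hW, C, hC, hWC⟩ := exists_nhds_isCompact_chronoDiamond_subset h hnb x
  set S : Set X → Set X := fun V => Uᶜ ∩ ⋃ p ∈ V, ⋃ q ∈ V, chronoDiamond d p q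
  have hSmono : Monotone S := fun V V' hV =>
    inter_subset_inter_right _ (biUnion_mono hV fun _ _ => biUnion_mono hV fun _ _ => le_rfl)
  have hne : ((𝓝 x).lift' S).NeBot := (lift'_neBot_iff hSmono).2 fun V hV => by
    obtain ⟨p, hpV, hpx⟩ := mem_closure_iff_nhds.1 (hlocal x).2 V hV
    obtain ⟨q, hqV, hxq⟩ := mem_closure_iff_nhds.1 (hlocal x).1 V hV
    obtain ⟨z, hz, hzU⟩ := not_subset.1 (hbad p q ⟨hpx, hxq⟩)
    exact ⟨z, hzU, mem_biUnion hpV (mem_biUnion hqV hz)⟩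
  have hSC : S W ⊆ C := fun z ⟨_, hz⟩ => by
    simp only [mem_iUnion] at hz
    obtain ⟨p, hp, q, hq, hz⟩ := hz
    exact hWC p hp q hq hz
  obtain ⟨z, -, hz⟩ :=
    hC.exists_clusterPt (le_principal_iff.2 (mem_of_superset (mem_lift' hW) hSC))
  have hzU : z ∉ U := by
    have hUc : z ∈ closure Uᶜ := mem_closure_iff_clusterPt.2 (hz.mono (le_principal_iff.2
      (mem_of_superset (mem_lift' (h := S) univ_mem) inter_subset_left)))
    rwa [hU.isClosed_compl.closure_eq] at hUc
  have hnear : ∀ A ∈ 𝓝 x, ∀ B ∈ 𝓝 z, ∃ z' ∈ B, ∃ p ∈ A, ∃ q ∈ A, z' ∈ chronoDiamond d p q :=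
    fun A hA B hB => by
      obtain ⟨z', hz'B, -, hz'⟩ := clusterPt_iff_nonempty.1 hz hB (mem_lift' (h := S) hA)
      simp only [mem_iUnion, exists_prop] at hz'
      exact ⟨z', hz'B, hz'⟩
  have hxz : (x, z) ∈ closure {p : X × X | 0 < d p.1 p.2} :=
    mem_closure_prod_iff.2 fun A hA B hB => by
      obtain ⟨z', hz'B, p, hpA, -, -, hpz', -⟩ := hnear A hA B hB
      exact ⟨(p, z'), hpz', hpA, hz'B⟩
  have hzx : (z, x) ∈ closure {p : X × X | 0 < d p.1 p.2} :=
    mem_closure_prod_iff.2 fun B hB A hA => by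
      obtain ⟨z', hz'B, -, -, q, hqA, -, hz'q⟩ := hnear A hA B hB
      exact ⟨(z', q), hz'q, hz'B, hqA⟩
  obtain ⟨hd0, htri, ⟨hcont, -⟩, hsep⟩ := h
  rw [closure_setOf_pos_eq_setOf_jrel hd0 htri hcont hlocal] at hxz hzx
  obtain rfl : x = z := eq_of_jrel_of_jrel hsep hxz hzx
  exact hzU hx

lemma isTopologicalBasis_chronoDiamond (h : IsLMS ‹_› d) (hnb : NoBoundary d)
    (hlocal : ∀ p : X, p ∈ closure {q : X | 0 < d p q} ∧ p ∈ closure {q : X | 0 < d q p}) :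
    TopologicalSpace.IsTopologicalBasis {S : Set X | ∃ p q : X, S = chronoDiamond d p q} := by
  refine TopologicalSpace.isTopologicalBasis_of_isOpen_of_nhds ?_ fun x U hx hU => ?_
  · rintro _ ⟨p, q, rfl⟩
    exact isOpen_chronoDiamond h.2.2.1.1 p q
  · obtain ⟨p, q, hxpq, hpqU⟩ := exists_chronoDiamond_subset h hnb hlocal hU hx
    exact ⟨_, ⟨p, q, rfl⟩, hxpq, hpqU⟩

end LorentzianMetricSpace

open LorentzianMetricSpace in
/-- No Gaps theorem: in a Lorentzian metric space without chronological boundary,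
if every point lies in the closure of its own chronological future and past,
then `closure I = J` and the Alexandrov topology coincides with the LMS topology. -/
theorem lms_no_gaps
    (T : TopologicalSpace X) (d : X → X → ℝ)
    (h : IsLMS T d) (hnb : NoBoundary d)
    (hlocal : ∀ p : X, letI := T;
      p ∈ closure {q : X | 0 < d p q} ∧ p ∈ closure {q : X | 0 < d q p}) :
    (letI := T;
      closure {p : X × X | 0 < d p.1 p.2} = {p : X × X | Jrel d p.1 p.2}) ∧
    TopologicalSpace.generateFrom
      {S : Set X | ∃ p q : X, S = {z : X | 0 < d p z ∧ 0 < d z q}} = T :=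
  letI := T
  ⟨closure_setOf_pos_eq_setOf_jrel h.1 h.2.1 h.2.2.1.1 hlocal,
    (isTopologicalBasis_chronoDiamond h hnb hlocal).eq_generateFrom.symm⟩
end

section
/- Let (X,d) be a countably generated Lorentzian metric space, let τ : X → ℝ be a time function, let a < b be reals, and let Q be a dense subset of [a,b] with a, b ∈ Q. Let ζ : Q → X be a map such that τ(ζ(t)) = t for all t ∈ Q, and ζ(t) ≤ ζ(t') whenever t, t' ∈ Q with a ≤ t < t' ≤ b. Then ζ extends to an isocausal curve ζ̄ : [a,b] → X with τ(ζ̄(t)) = t for all t ∈ [a,b] and ζ̄(t) = ζ(t) for t ∈ Q. Moreover, if d(ζ(t),ζ(t')) + d(ζ(t'),ζ(t'')) = d(ζ(t),ζ(t'')) for all t < t' < t'' in Q, then ζ̄ is maximizing. -/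
open Filter Topology Set

variable {X : Type*}

/-!
Every cluster point of `ζ` at a parameter `t` has time `t`, and since `ζ` is causally
monotone and `J` is closed, any two such cluster points are causally related; the time
function therefore forces them to coincide. As `ζ(Q)` lies in the causal diamond
`J(ζ a, ζ b)`, which is compact by axiom (ii), `ζ` converges at every point of
`closure Q = [a, b]`. The same uniqueness argument, applied to the limit curve on `[a, b]`,
gives its continuity, while causal monotonicity and the maximizing identity are closed
conditions and pass to the limit.
-/

theorem Jrel.refl {d : X → X → ℝ} (x : X) : Jrel d x x := fun _ => ⟨le_rfl, le_rfl⟩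

theorem CountablyGenerated.noBoundary {d : X → X → ℝ} (h : CountablyGenerated d) :
    NoBoundary d := by
  obtain ⟨G, -, hG⟩ := h
  exact fun x => ⟨(hG x).1.imp fun _ hp => hp.2, (hG x).2.imp fun _ hq => hq.2⟩

def CausalMonotoneOn (d : X → X → ℝ) (γ : ℝ → X) (S : Set ℝ) : Prop :=
  ∀ ⦃u⦄, u ∈ S → ∀ ⦃v⦄, v ∈ S → u ≤ v → Jrel d (γ u) (γ v)

theorem causalMonotoneOn_of_lt {d : X → X → ℝ} {γ : ℝ → X} {S : Set ℝ}
    (h : ∀ u ∈ S, ∀ v ∈ S, u < v → Jrel d (γ u) (γ v)) : CausalMonotoneOn d γ S := by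
  intro u hu v hv huv
  rcases huv.eq_or_lt with rfl | hlt
  · exact Jrel.refl _
  · exact h u hu v hv hlt

section Topology

variable [TopologicalSpace X] {d : X → X → ℝ}

theorem isClosed_setOf_jrel (hd : Continuous fun p : X × X => d p.1 p.2) :
    IsClosed {p : X × X | Jrel d p.1 p.2} := by
  simp only [Jrel, ofPred_forall]
  exact isClosed_iInter fun q =>
    (isClosed_le (hd.comp (continuous_const.prodMk continuous_fst))
      (hd.comp (continuous_const.prodMk continuous_snd))).inter
    (isClosed_le (hd.comp (continuous_snd.prodMk continuous_const))
      (hd.comp (continuous_fst.prodMk continuous_const)))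

theorem isClosed_setOf_jrel_jrel (hd : Continuous fun p : X × X => d p.1 p.2) (x y : X) :
    IsClosed {z | Jrel d x z ∧ Jrel d z y} :=
  ((isClosed_setOf_jrel hd).preimage (continuous_const.prodMk continuous_id)).inter
    ((isClosed_setOf_jrel hd).preimage (continuous_id.prodMk continuous_const))

theorem isCompact_setOf_jrel_jrel (h : IsLMS ‹_› d) (hnb : NoBoundary d) (x y : X) :
    IsCompact {z | Jrel d x z ∧ Jrel d z y} := by
  obtain ⟨-, htri, ⟨hd, hcomp⟩, -⟩ := h
  rcases eq_empty_or_nonempty {z | Jrel d x z ∧ Jrel d z y} with hempty | ⟨z₀, hz₀⟩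
  · rw [hempty]; exact isCompact_empty
  have pos_trans : ∀ {u v w}, 0 < d u v → 0 < d v w → 0 < d u w := fun h₁ h₂ =>
    (add_pos h₁ h₂).trans_le (htri _ _ _ h₁ h₂)
  obtain ⟨p, hpx⟩ := (hnb x).1
  obtain ⟨q, hyq⟩ := (hnb y).2
  obtain ⟨p₂, hp₂p⟩ := (hnb p).1
  obtain ⟨q₂, hqq₂⟩ := (hnb q).2
  -- For `z` in the diamond, `(p, z) ∈ I_ε ∩ (closure I(p₂, q₂))²` with `ε = d p x`.
  have hmem : ∀ {z}, Jrel d x z → Jrel d z y → 0 < d p₂ z ∧ 0 < d z q₂ := fun hxz hzy =>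
    ⟨pos_trans hp₂p (hpx.trans_le (hxz p).1), pos_trans (hyq.trans_le (hzy q).2) hqq₂⟩
  have hp : 0 < d p₂ p ∧ 0 < d p q₂ :=
    ⟨hp₂p, pos_trans (hpx.trans_le (hz₀.1 p).1) (hmem hz₀.1 hz₀.2).2⟩
  refine ((hcomp p₂ q₂ _ hpx).image continuous_snd).of_isClosed_subset
    (isClosed_setOf_jrel_jrel hd x y) fun z hz => ⟨(p, z), ⟨(hz.1 p).1, ?_, ?_⟩, rfl⟩
  · exact subset_closure hp
  · exact subset_closure (hmem hz.1 hz.2)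

theorem mapClusterPt_nhdsWithin_self {Y : Type*} [TopologicalSpace Y] {γ : Y → X} {S : Set Y}
    {t : Y} (ht : t ∈ S) : MapClusterPt (γ t) (𝓝[S] t) γ :=
  (tendsto_pure_nhds γ t).mapClusterPt.mono (pure_le_nhdsWithin ht)

variable {τ : X → ℝ} {γ : ℝ → X} {S : Set ℝ} {l : Filter ℝ} {z₁ z₂ : X}

theorem CausalMonotoneOn.jrel_or_jrel_of_mapClusterPt
    (hd : Continuous fun p : X × X => d p.1 p.2) (hmono : CausalMonotoneOn d γ S) (hS : S ∈ l)
    (h₁ : MapClusterPt z₁ l γ) (h₂ : MapClusterPt z₂ l γ) : Jrel d z₁ z₂ ∨ Jrel d z₂ z₁ := by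
  refine ((isClosed_setOf_jrel hd).union ((isClosed_setOf_jrel hd).preimage continuous_swap))
    |>.mem_of_mapClusterPt (h₁.prodMap h₂) ?_
  filter_upwards [prod_mem_prod hS hS] with ⟨u, v⟩ ⟨hu, hv⟩
  exact (le_total u v).imp (hmono hu hv) (hmono hv hu)

theorem apply_eq_of_mapClusterPt (hτ : Continuous τ) (hpar : LeftInvOn τ γ S) (hS : S ∈ l)
    {t : ℝ} (hl : l ≤ 𝓝 t) {z : X} (hz : MapClusterPt z l γ) : τ z = t := by
  have hτγ : τ ∘ γ =ᶠ[l] id := mem_of_superset hS fun _ hu => hpar hu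
  have hcl : ClusterPt (τ z) l :=
    mapClusterPt_id_iff.1 (hτγ.mapClusterPt_iff.1 (hz.tendsto_comp (hτ.tendsto z)))
  by_contra hne
  exact (hcl.mono hl).ne (disjoint_iff.1 (disjoint_nhds_nhds.2 hne))

theorem eq_of_mapClusterPt (hd : Continuous fun p : X × X => d p.1 p.2)
    (hτ : IsTimeFunction ‹_› d τ) (hmono : CausalMonotoneOn d γ S) (hpar : LeftInvOn τ γ S)
    (hS : S ∈ l) {t : ℝ} (hl : l ≤ 𝓝 t) (h₁ : MapClusterPt z₁ l γ) (h₂ : MapClusterPt z₂ l γ) :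
    z₁ = z₂ := by
  have hτz : τ z₁ = τ z₂ :=
    (apply_eq_of_mapClusterPt hτ.1 hpar hS hl h₁).trans
      (apply_eq_of_mapClusterPt hτ.1 hpar hS hl h₂).symm
  by_contra hne
  rcases hmono.jrel_or_jrel_of_mapClusterPt hd hS h₁ h₂ with hJ | hJ
  · exact (hτ.2 _ _ ⟨hJ, hne⟩).ne hτz
  · exact (hτ.2 _ _ ⟨hJ, Ne.symm hne⟩).ne hτz.symm

theorem tendsto_nhdsWithin_of_mapClusterPt (hd : Continuous fun p : X × X => d p.1 p.2)
    (hτ : IsTimeFunction ‹_› d τ) (hmono : CausalMonotoneOn d γ S) (hpar : LeftInvOn τ γ S)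
    {C : Set X} (hC : IsCompact C) (hγC : MapsTo γ S C) {t : ℝ} {z : X}
    (hz : MapClusterPt z (𝓝[S] t) γ) : Tendsto γ (𝓝[S] t) (𝓝 z) :=
  hC.tendsto_nhds_of_unique_mapClusterPt (eventually_mem_nhdsWithin.mono hγC) fun _ _ h =>
    eq_of_mapClusterPt hd hτ hmono hpar self_mem_nhdsWithin nhdsWithin_le_nhds h hz

theorem exists_tendsto_nhdsWithin (hd : Continuous fun p : X × X => d p.1 p.2)
    (hτ : IsTimeFunction ‹_› d τ) (hmono : CausalMonotoneOn d γ S) (hpar : LeftInvOn τ γ S)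
    {C : Set X} (hC : IsCompact C) (hγC : MapsTo γ S C) {t : ℝ} (ht : t ∈ closure S) :
    ∃ z, Tendsto γ (𝓝[S] t) (𝓝 z) := by
  have := mem_closure_iff_nhdsWithin_neBot.1 ht
  obtain ⟨z, -, hz⟩ := hC.exists_mapClusterPt_of_frequently
    ((eventually_mem_nhdsWithin (a := t)).mono hγC).frequently
  exact ⟨z, tendsto_nhdsWithin_of_mapClusterPt hd hτ hmono hpar hC hγC hz⟩

end Topology

section Extension

variable [TopologicalSpace X] {d : X → X → ℝ} {τ : X → ℝ} {Q : Set ℝ} {ζ ζ' : ℝ → X}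

theorem isIsocausalOn_of_causalMonotoneOn {S : Set ℝ} (hcont : ContinuousOn ζ S)
    (hmono : CausalMonotoneOn d ζ S) (hpar : LeftInvOn τ ζ S) : IsIsocausalOn ‹_› d ζ S :=
  ⟨hcont, fun _ hs _ ht hst => ⟨hmono hs ht hst.le, fun heq => hst.ne (hpar.injOn hs ht heq)⟩⟩

theorem eqOn_of_tendsto_nhdsWithin (hd : Continuous fun p : X × X => d p.1 p.2)
    (hτ : IsTimeFunction ‹_› d τ) (hmono : CausalMonotoneOn d ζ Q) (hpar : LeftInvOn τ ζ Q)
    (hζ' : ∀ t ∈ closure Q, Tendsto ζ (𝓝[Q] t) (𝓝 (ζ' t))) : EqOn ζ' ζ Q := by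
  intro t ht
  have := mem_closure_iff_nhdsWithin_neBot.1 (subset_closure ht)
  exact eq_of_mapClusterPt hd hτ hmono hpar self_mem_nhdsWithin nhdsWithin_le_nhds
    (hζ' t (subset_closure ht)).mapClusterPt (mapClusterPt_nhdsWithin_self ht)

theorem leftInvOn_closure_of_tendsto (hτ : Continuous τ) (hpar : LeftInvOn τ ζ Q)
    (hζ' : ∀ t ∈ closure Q, Tendsto ζ (𝓝[Q] t) (𝓝 (ζ' t))) : LeftInvOn τ ζ' (closure Q) := by
  intro t ht
  have := mem_closure_iff_nhdsWithin_neBot.1 ht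
  exact apply_eq_of_mapClusterPt hτ hpar self_mem_nhdsWithin nhdsWithin_le_nhds
    (hζ' t ht).mapClusterPt

theorem causalMonotoneOn_closure_of_tendsto (hd : Continuous fun p : X × X => d p.1 p.2)
    (hmono : CausalMonotoneOn d ζ Q) (hζ' : ∀ t ∈ closure Q, Tendsto ζ (𝓝[Q] t) (𝓝 (ζ' t))) :
    CausalMonotoneOn d ζ' (closure Q) := by
  intro s hs t ht hst
  rcases hst.eq_or_lt with rfl | hlt
  · exact Jrel.refl _
  have := mem_closure_iff_nhdsWithin_neBot.1 hs
  have := mem_closure_iff_nhdsWithin_neBot.1 ht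
  have hlim : Tendsto (Prod.map ζ ζ) (𝓝[Q] s ×ˢ 𝓝[Q] t) (𝓝 (ζ' s, ζ' t)) := by
    rw [nhds_prod_eq]
    exact (hζ' s hs).prodMap (hζ' t ht)
  refine (isClosed_setOf_jrel hd).mem_of_tendsto hlim ?_
  filter_upwards [prod_mem_prod self_mem_nhdsWithin self_mem_nhdsWithin,
    (tendsto_fst.mono_right nhdsWithin_le_nhds).eventually_lt
      (tendsto_snd.mono_right nhdsWithin_le_nhds) hlt] with ⟨u, v⟩ ⟨hu, hv⟩ huv
  exact hmono hu hv huv.le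

theorem maximizingOn_closure_of_tendsto (hd : Continuous fun p : X × X => d p.1 p.2)
    (hζ' : ∀ t ∈ closure Q, Tendsto ζ (𝓝[Q] t) (𝓝 (ζ' t))) (hmax : MaximizingOn d ζ Q) :
    MaximizingOn d ζ' (closure Q) := by
  intro t ht t' ht' t'' ht'' htt' ht't''
  have := mem_closure_iff_nhdsWithin_neBot.1 ht
  have := mem_closure_iff_nhdsWithin_neBot.1 ht'
  have := mem_closure_iff_nhdsWithin_neBot.1 ht''
  set F := 𝓝[Q] t ×ˢ (𝓝[Q] t' ×ˢ 𝓝[Q] t'')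
  have hlim : Tendsto (Prod.map ζ (Prod.map ζ ζ)) F (𝓝 (ζ' t, ζ' t', ζ' t'')) := by
    rw [nhds_prod_eq, nhds_prod_eq]
    exact (hζ' t ht).prodMap ((hζ' t' ht').prodMap (hζ' t'' ht''))
  have hd' : ∀ {f g : X × X × X → X}, Continuous f → Continuous g →
      Continuous fun x => d (f x) (g x) := fun hf hg => hd.comp (hf.prodMk hg)
  have hclosed : IsClosed {x : X × X × X | d x.1 x.2.1 + d x.2.1 x.2.2 = d x.1 x.2.2} :=
    isClosed_eq ((hd' continuous_fst (continuous_fst.comp continuous_snd)).add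
      (hd' (continuous_fst.comp continuous_snd) (continuous_snd.comp continuous_snd)))
      (hd' continuous_fst (continuous_snd.comp continuous_snd))
  have h₁ : Tendsto (fun p : ℝ × ℝ × ℝ => p.1) F (𝓝 t) := tendsto_fst.mono_right nhdsWithin_le_nhds
  have h₂ : Tendsto (fun p : ℝ × ℝ × ℝ => p.2.1) F (𝓝 t') :=
    (tendsto_fst.comp tendsto_snd).mono_right nhdsWithin_le_nhds
  have h₃ : Tendsto (fun p : ℝ × ℝ × ℝ => p.2.2) F (𝓝 t'') :=
    (tendsto_snd.comp tendsto_snd).mono_right nhdsWithin_le_nhds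
  refine hclosed.mem_of_tendsto hlim ?_
  filter_upwards [prod_mem_prod self_mem_nhdsWithin
      (prod_mem_prod self_mem_nhdsWithin self_mem_nhdsWithin),
    h₁.eventually_lt h₂ htt', h₂.eventually_lt h₃ ht't''] with ⟨u, v, w⟩ ⟨hu, hv, hw⟩ huv hvw
  exact hmax u hu v hv w hw huv hvw

theorem continuousOn_closure_of_tendsto (hd : Continuous fun p : X × X => d p.1 p.2)
    (hτ : IsTimeFunction ‹_› d τ) (hmono' : CausalMonotoneOn d ζ' (closure Q))
    (hpar' : LeftInvOn τ ζ' (closure Q)) {C : Set X} (hC : IsCompact C) (hCc : IsClosed C)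
    (hζC : MapsTo ζ Q C) (hζ' : ∀ t ∈ closure Q, Tendsto ζ (𝓝[Q] t) (𝓝 (ζ' t))) :
    ContinuousOn ζ' (closure Q) := by
  have hζ'C : MapsTo ζ' (closure Q) C := fun t ht => by
    have := mem_closure_iff_nhdsWithin_neBot.1 ht
    exact hCc.mem_of_tendsto (hζ' t ht) (eventually_mem_nhdsWithin.mono hζC)
  exact fun t ht => tendsto_nhdsWithin_of_mapClusterPt hd hτ hmono' hpar' hC hζ'C
    (mapClusterPt_nhdsWithin_self ht)

theorem CausalMonotoneOn.exists_isIsocausalOn_closure (hmono : CausalMonotoneOn d ζ Q)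
    (hd : Continuous fun p : X × X => d p.1 p.2) (hτ : IsTimeFunction ‹_› d τ)
    (hpar : LeftInvOn τ ζ Q) {C : Set X} (hC : IsCompact C) (hCc : IsClosed C)
    (hζC : MapsTo ζ Q C) :
    ∃ ζ' : ℝ → X, IsIsocausalOn ‹_› d ζ' (closure Q) ∧ LeftInvOn τ ζ' (closure Q) ∧
      EqOn ζ' ζ Q ∧ (MaximizingOn d ζ Q → MaximizingOn d ζ' (closure Q)) := by
  have : Nonempty X := ⟨ζ 0⟩
  choose! ζ' hζ' using fun t (ht : t ∈ closure Q) =>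
    exists_tendsto_nhdsWithin hd hτ hmono hpar hC hζC ht
  have hmono' := causalMonotoneOn_closure_of_tendsto hd hmono hζ'
  have hpar' := leftInvOn_closure_of_tendsto hτ.1 hpar hζ'
  exact ⟨ζ', isIsocausalOn_of_causalMonotoneOn
      (continuousOn_closure_of_tendsto hd hτ hmono' hpar' hC hCc hζC hζ') hmono' hpar',
    hpar', eqOn_of_tendsto_nhdsWithin hd hτ hmono hpar hζ', maximizingOn_closure_of_tendsto hd hζ'⟩

end Extension

theorem lms_curves_from_dense_general
    (T : TopologicalSpace X) (d : X → X → ℝ)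
    (h : IsLMS T d) (hcg : CountablyGenerated d)
    (τ : X → ℝ) (hτ : IsTimeFunction T d τ)
    (a b : ℝ)
    (Q : Set ℝ) (hQsub : Q ⊆ Set.Icc a b) (hQdense : Set.Icc a b ⊆ closure Q)
    (haQ : a ∈ Q) (hbQ : b ∈ Q)
    (ζ : ℝ → X)
    (hpar : ∀ t ∈ Q, τ (ζ t) = t)
    (hmono : ∀ t ∈ Q, ∀ t' ∈ Q, t < t' → Jrel d (ζ t) (ζ t')) :
    ∃ ζ' : ℝ → X,
      IsIsocausalOn T d ζ' (Set.Icc a b) ∧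
      (∀ t ∈ Set.Icc a b, τ (ζ' t) = t) ∧
      (∀ t ∈ Q, ζ' t = ζ t) ∧
      ((∀ t ∈ Q, ∀ t' ∈ Q, ∀ t'' ∈ Q, t < t' → t' < t'' →
          d (ζ t) (ζ t') + d (ζ t') (ζ t'') = d (ζ t) (ζ t'')) →
        MaximizingOn d ζ' (Set.Icc a b)) := by
  let _ := T
  have hd : Continuous fun p : X × X => d p.1 p.2 := h.2.2.1.1
  have hζmono : CausalMonotoneOn d ζ Q := causalMonotoneOn_of_lt hmono
  have hζC : MapsTo ζ Q {z | Jrel d (ζ a) z ∧ Jrel d z (ζ b)} := fun u hu =>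
    ⟨hζmono haQ hu (hQsub hu).1, hζmono hu hbQ (hQsub hu).2⟩
  rw [← (closure_minimal hQsub isClosed_Icc).antisymm hQdense]
  exact hζmono.exists_isIsocausalOn_closure hd hτ hpar
    (isCompact_setOf_jrel_jrel h hcg.noBoundary _ _) (isClosed_setOf_jrel_jrel hd _ _) hζC

/-- A `τ`-parametrized isotone map defined on a dense subset `Q` of `[a,b]`
(containing `a` and `b`) extends to an isocausal curve on `[a,b]` parametrized
by `τ`; if the map satisfies the maximizing condition on `Q`, the extension is
maximizing. -/
theorem lms_curves_from_dense
    (T : TopologicalSpace X) (d : X → X → ℝ)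
    (h : IsLMS T d) (hcg : CountablyGenerated d)
    (τ : X → ℝ) (hτ : IsTimeFunction T d τ)
    (a b : ℝ) (hab : a < b)
    (Q : Set ℝ) (hQsub : Q ⊆ Set.Icc a b) (hQdense : Set.Icc a b ⊆ closure Q)
    (haQ : a ∈ Q) (hbQ : b ∈ Q)
    (ζ : ℝ → X)
    (hpar : ∀ t ∈ Q, τ (ζ t) = t)
    (hmono : ∀ t ∈ Q, ∀ t' ∈ Q, t < t' → Jrel d (ζ t) (ζ t')) :
    ∃ ζ' : ℝ → X,
      IsIsocausalOn T d ζ' (Set.Icc a b) ∧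
      (∀ t ∈ Set.Icc a b, τ (ζ' t) = t) ∧
      (∀ t ∈ Q, ζ' t = ζ t) ∧
      ((∀ t ∈ Q, ∀ t' ∈ Q, ∀ t'' ∈ Q, t < t' → t' < t'' →
          d (ζ t) (ζ t') + d (ζ t') (ζ t'') = d (ζ t) (ζ t'')) →
        MaximizingOn d ζ' (Set.Icc a b)) :=
  lms_curves_from_dense_general T d h hcg τ hτ a b Q hQsub hQdense haQ hbQ ζ hpar hmono
end

section
/- Every Lorentzian metric space (X,d) with no chronological boundary is non-partial imprisoning: if γ : [0,b) → X is a future inextendible isocausal curve (it has no future endpoint) and C ⊆ X is compact, then there is no sequence b_k → b with b_k < b and γ(b_k) ∈ C for all k; and the time-reversed statement holds for past inextendible isocausal curves. -/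
/-!
A cluster point `p` of the imprisoned sequence is sandwiched as `q₁ ≪ p ≪ q₂`. The curve comes
arbitrarily late into the open set `{d(q₁, ·) > δ, d(·, q₂) > δ}` around `p`, and since it is
causally monotone its whole tail then satisfies both inequalities, which puts the tail inside one
of the compact sets of axiom (ii). Every cluster point of the tail is a causal upper bound of the
curve, so two of them are `J`-related both ways and coincide because `d` distinguishes points.
Hence the tail converges to `p`: a future endpoint. The past case is the future case for the
reversed distance `flip d`.
-/

open Filter Topology Set

variable {X : Type*}

theorem jrel_flip {d : X → X → ℝ} {x y : X} : Jrel (flip d) x y ↔ Jrel d y x :=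
  forall_congr' fun _ => and_comm

theorem Jrel.antisymm {d : X → X → ℝ}
    (hsep : ∀ x y : X, x ≠ y → ∃ z : X, d x z ≠ d y z ∨ d z x ≠ d z y) {x y : X}
    (hxy : Jrel d x y) (hyx : Jrel d y x) : x = y := by
  by_contra hne
  obtain ⟨z, hz | hz⟩ := hsep x y hne
  · exact hz (le_antisymm (hyx z).2 (hxy z).2)
  · exact hz (le_antisymm (hxy z).1 (hyx z).1)

theorem NoBoundary.flip {d : X → X → ℝ} (hnb : NoBoundary d) : NoBoundary (flip d) :=
  fun x => (hnb x).symm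

section Topology

variable [TopologicalSpace X] {d : X → X → ℝ}

theorem isClosed_setOf_jrel_left (hd : Continuous fun p : X × X => d p.1 p.2) (x : X) :
    IsClosed {z | Jrel d x z} := by
  simp only [Jrel, ofPred_forall, ofPred_and]
  exact isClosed_iInter fun p =>
    (isClosed_le continuous_const (hd.uncurry_left p)).inter
      (isClosed_le (hd.uncurry_right p) continuous_const)

theorem isClosed_setOf_jrel_right (hd : Continuous fun p : X × X => d p.1 p.2) (y : X) :
    IsClosed {z | Jrel d z y} := by
  simp only [Jrel, ofPred_forall, ofPred_and]
  exact isClosed_iInter fun p =>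
    (isClosed_le (hd.uncurry_left p) continuous_const).inter
      (isClosed_le continuous_const (hd.uncurry_right p))

theorem LMSAxiom2.isCompact_setOf_le_inter_closure (h : LMSAxiom2 ‹_› d) {x y w : X}
    (hw : w ∈ closure {z | 0 < d x z ∧ 0 < d z y}) {ε : ℝ} (hε : 0 < ε) :
    IsCompact ({z | ε ≤ d z w} ∩ closure {z | 0 < d x z ∧ 0 < d z y}) := by
  refine ((h.2 x y ε hε).image continuous_fst).of_isClosed_subset
    ((isClosed_le continuous_const (h.1.uncurry_right w)).inter isClosed_closure) ?_
  rintro z ⟨hzw, hz⟩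
  exact ⟨(z, w), ⟨hzw, hz, hw⟩, rfl⟩

theorem IsLMS.flip (h : IsLMS ‹_› d) : IsLMS ‹_› (flip d) := by
  obtain ⟨hd0, htri, ⟨hdc, hcpt⟩, hsep⟩ := h
  refine ⟨fun x y => hd0 y x, fun x y z hxy hyz => ?_, ⟨hdc.comp continuous_swap, ?_⟩,
    fun x y hxy => (hsep x y hxy).imp fun _ => Or.symm⟩
  · exact (add_comm _ _).trans_le (htri z y x hyz hxy)
  · intro x y ε hε
    convert (hcpt y x ε hε).image continuous_swap using 1
    rw [image_swap_eq_preimage_swap]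
    ext ⟨u, v⟩
    simp only [Function.flip_def, mem_inter_iff, mem_ofPred_eq, mem_prod, mem_preimage,
      Prod.swap_prod_mk, and_comm]

end Topology

section Eventually

variable {ι : Type*} {l : Filter ι} {f : ι → X} {r : X → X → Prop}

theorem Filter.Frequently.eventually_of_upwardClosed
    (hmono : ∀ᶠ s in l, ∀ᶠ t in l, r (f s) (f t)) {P : X → Prop}
    (hP : ∀ y z, r y z → P y → P z) (h : ∃ᶠ t in l, P (f t)) : ∀ᶠ t in l, P (f t) := by
  obtain ⟨s, hs, hst⟩ := (h.and_eventually hmono).exists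
  exact hst.mono fun t hst => hP _ _ hst hs

theorem Filter.Frequently.eventually_of_downwardClosed
    (hmono : ∀ᶠ s in l, ∀ᶠ t in l, r (f s) (f t)) {P : X → Prop}
    (hP : ∀ y z, r y z → P z → P y) (h : ∃ᶠ t in l, P (f t)) : ∀ᶠ t in l, P (f t) :=
  hmono.mono fun _ hs =>
    let ⟨_, ht, hst⟩ := (h.and_eventually hs).exists
    hP _ _ hst ht

variable [TopologicalSpace X] {d : X → X → ℝ}

theorem MapClusterPt.eventually_jrel (hd : Continuous fun p : X × X => d p.1 p.2)
    (hmono : ∀ᶠ s in l, ∀ᶠ t in l, Jrel d (f s) (f t)) {q : X} (hq : MapClusterPt q l f) :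
    ∀ᶠ s in l, Jrel d (f s) q :=
  hmono.mono fun s hs => (isClosed_setOf_jrel_left hd (f s)).mem_of_mapClusterPt hq hs

theorem IsLMS.eq_of_mapClusterPt (h : IsLMS ‹_› d)
    (hmono : ∀ᶠ s in l, ∀ᶠ t in l, Jrel d (f s) (f t)) {q₁ q₂ : X}
    (hq₁ : MapClusterPt q₁ l f) (hq₂ : MapClusterPt q₂ l f) : q₁ = q₂ :=
  have hd := h.2.2.1.1
  Jrel.antisymm h.2.2.2
    ((isClosed_setOf_jrel_right hd q₂).mem_of_mapClusterPt hq₁ (hq₂.eventually_jrel hd hmono))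
    ((isClosed_setOf_jrel_right hd q₁).mem_of_mapClusterPt hq₂ (hq₁.eventually_jrel hd hmono))

theorem IsLMS.exists_isCompact_eventually_mem (h : IsLMS ‹_› d) (hnb : NoBoundary d)
    (hmono : ∀ᶠ s in l, ∀ᶠ t in l, Jrel d (f s) (f t)) {p : X} (hp : MapClusterPt p l f) :
    ∃ K, IsCompact K ∧ ∀ᶠ t in l, f t ∈ K := by
  obtain ⟨hd0, htri, hax, -⟩ := h
  obtain ⟨⟨q₁, hq₁⟩, ⟨q₂, hq₂⟩⟩ := hnb p
  obtain ⟨r, hr⟩ := (hnb q₂).2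
  obtain ⟨δ, hδ, hδp⟩ := exists_between (lt_min hq₁ hq₂)
  have hU : ∀ᶠ z in 𝓝 p, δ < d q₁ z ∧ δ < d z q₂ :=
    ((isOpen_lt continuous_const (hax.1.uncurry_left q₁)).inter
      (isOpen_lt continuous_const (hax.1.uncurry_right q₂))).mem_nhds (lt_min_iff.1 hδp)
  have hfreq := hp.frequently hU
  have hlow : ∀ᶠ t in l, δ < d q₁ (f t) :=
    (hfreq.mono fun _ => And.left).eventually_of_upwardClosed hmono (P := (δ < d q₁ ·))
      fun _ _ hyz hy => hy.trans_le ((hyz q₁).1)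
  have hup : ∀ᶠ t in l, δ < d (f t) q₂ :=
    (hfreq.mono fun _ => And.right).eventually_of_downwardClosed hmono (P := (δ < d · q₂))
      fun _ _ hyz hz => hz.trans_le ((hyz q₂).2)
  have hq₂I : q₂ ∈ {z | 0 < d q₁ z ∧ 0 < d z r} :=
    ⟨(add_pos hq₁ hq₂).trans_le (htri _ _ _ hq₁ hq₂), hr⟩
  refine ⟨_, hax.isCompact_setOf_le_inter_closure (subset_closure hq₂I) hδ, ?_⟩
  filter_upwards [hlow, hup] with t hlow hup
  refine ⟨hup.le, subset_closure ⟨hδ.trans hlow, ?_⟩⟩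
  have := htri _ _ _ (hδ.trans hup) hr
  linarith [hd0 (f t) q₂]

theorem IsLMS.tendsto_of_mapClusterPt (h : IsLMS ‹_› d) (hnb : NoBoundary d)
    (hmono : ∀ᶠ s in l, ∀ᶠ t in l, Jrel d (f s) (f t)) {p : X} (hp : MapClusterPt p l f) :
    Tendsto f l (𝓝 p) :=
  let ⟨_, hK, hfK⟩ := h.exists_isCompact_eventually_mem hnb hmono hp
  hK.tendsto_nhds_of_unique_mapClusterPt hfK fun _ _ hq => h.eq_of_mapClusterPt hmono hq hp

end Eventually

section Curve

variable {T : TopologicalSpace X} {d : X → X → ℝ} {γ : ℝ → X}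

theorem IsIsocausalOn.eventually_eventually_jrel_nhdsLT {b : EReal}
    (hγ : IsIsocausalOn T d γ {t : ℝ | 0 ≤ t ∧ (t : EReal) < b}) (hb : 0 < b) :
    ∀ᶠ s in comap (fun t : ℝ => (t : EReal)) (𝓝[<] b),
      ∀ᶠ t in comap (fun t : ℝ => (t : EReal)) (𝓝[<] b), Jrel d (γ s) (γ t) := by
  have hIoo : ∀ s : ℝ, (s : EReal) < b →
      ∀ᶠ t in comap (fun t : ℝ => (t : EReal)) (𝓝[<] b), s < t ∧ (t : EReal) < b :=
    fun s hs => by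
      filter_upwards [preimage_mem_comap (Ioo_mem_nhdsLT hs)] with t ht
      exact ⟨EReal.coe_lt_coe_iff.1 ht.1, ht.2⟩
  filter_upwards [hIoo 0 hb] with s hs
  filter_upwards [hIoo s hs.2] with t ht
  exact (hγ.2 s ⟨hs.1.le, hs.2⟩ t ⟨hs.1.le.trans ht.1.le, ht.2⟩ ht.1).1

theorem IsIsocausalOn.eventually_eventually_jrel_flip_nhdsGT {a : EReal}
    (hγ : IsIsocausalOn T d γ {t : ℝ | a < (t : EReal) ∧ t ≤ 0}) (ha : a < 0) :
    ∀ᶠ s in comap (fun t : ℝ => (t : EReal)) (𝓝[>] a),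
      ∀ᶠ t in comap (fun t : ℝ => (t : EReal)) (𝓝[>] a), Jrel (flip d) (γ s) (γ t) := by
  have hIoo : ∀ s : ℝ, a < (s : EReal) →
      ∀ᶠ (t : ℝ) in comap (fun t : ℝ => (t : EReal)) (𝓝[>] a), a < (t : EReal) ∧ t < s :=
    fun s hs => by
      filter_upwards [preimage_mem_comap (Ioo_mem_nhdsGT hs)] with t ht
      exact ⟨ht.1, EReal.coe_lt_coe_iff.1 ht.2⟩
  filter_upwards [hIoo 0 ha] with s hs
  filter_upwards [hIoo s hs.1] with t ht
  exact jrel_flip.2 (hγ.2 t ⟨ht.1, ht.2.le.trans hs.2.le⟩ s ⟨hs.1, hs.2.le⟩ ht.2).1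

end Curve

/-- Every Lorentzian metric space without chronological boundary is non-partial
imprisoning: no future inextendible isocausal curve is partially future imprisoned
in a compact set, and dually in the past. -/
theorem lms_non_partial_imprisonment
    (T : TopologicalSpace X) (d : X → X → ℝ)
    (h : IsLMS T d) (hnb : NoBoundary d) :
    (∀ b : EReal, (0 : EReal) < b →
      ∀ γ : ℝ → X, IsIsocausalOn T d γ {t : ℝ | 0 ≤ t ∧ (t : EReal) < b} →
      (letI := T; ¬∃ p : X, Filter.Tendsto γ
        (Filter.comap (fun t : ℝ => (t : EReal)) (𝓝[<] b)) (𝓝 p)) →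
      ∀ C : Set X, (letI := T; IsCompact C) →
      ¬∃ bk : ℕ → ℝ, (∀ k, 0 ≤ bk k ∧ (bk k : EReal) < b) ∧
        Filter.Tendsto (fun k => (bk k : EReal)) Filter.atTop (𝓝 b) ∧
        ∀ k, γ (bk k) ∈ C) ∧
    (∀ a : EReal, a < (0 : EReal) →
      ∀ γ : ℝ → X, IsIsocausalOn T d γ {t : ℝ | a < (t : EReal) ∧ t ≤ 0} →
      (letI := T; ¬∃ p : X, Filter.Tendsto γ
        (Filter.comap (fun t : ℝ => (t : EReal)) (𝓝[>] a)) (𝓝 p)) →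
      ∀ C : Set X, (letI := T; IsCompact C) →
      ¬∃ ak : ℕ → ℝ, (∀ k, a < (ak k : EReal) ∧ ak k ≤ 0) ∧
        Filter.Tendsto (fun k => (ak k : EReal)) Filter.atTop (𝓝 a) ∧
        ∀ k, γ (ak k) ∈ C) := by
  let _ : TopologicalSpace X := T
  constructor
  · rintro b hb γ hγ hne C hC ⟨bk, hbk, hbkb, hbkC⟩
    have hbkF : Tendsto bk atTop (comap (fun t : ℝ => (t : EReal)) (𝓝[<] b)) :=
      tendsto_comap_iff.2 (tendsto_nhdsWithin_iff.2 ⟨hbkb, .of_forall fun k => (hbk k).2⟩)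
    obtain ⟨p, -, hp⟩ := hC.exists_mapClusterPt_of_frequently (.of_forall (f := atTop) hbkC)
    exact hne ⟨p, h.tendsto_of_mapClusterPt hnb (hγ.eventually_eventually_jrel_nhdsLT hb)
      (hp.of_comp hbkF)⟩
  · rintro a ha γ hγ hne C hC ⟨ak, hak, haka, hakC⟩
    have hakF : Tendsto ak atTop (comap (fun t : ℝ => (t : EReal)) (𝓝[>] a)) :=
      tendsto_comap_iff.2 (tendsto_nhdsWithin_iff.2 ⟨haka, .of_forall fun k => (hak k).1⟩)
    obtain ⟨p, -, hp⟩ := hC.exists_mapClusterPt_of_frequently (.of_forall (f := atTop) hakC)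
    exact hne ⟨p, h.flip.tendsto_of_mapClusterPt hnb.flip
      (hγ.eventually_eventually_jrel_flip_nhdsGT ha) (hp.of_comp hakF)⟩
end
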